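/- arXiv:2210.12916 — 2 statements merged into one kernel-verified Lean document; each statement's English description precedes it below -/
import Mathlib

section
/- Let C be a channel from a finite nonempty type X to a finite nonempty type Y all of whose entries are strictly positive. Then the lift capacity of C, i.e. the supremum over all full-support priors π on X of Lift(π, C), equals the maximum over all x, x' ∈ X and y ∈ Y of C x y / C x' y. Equivalently, MaxLift(C) = e^ε where ε is the (smallest) local differential privacy parameter of C. -/
open Finset

variable {X Y W : Type*}

/-- Output marginal p(y) = ∑_x π x * C x y. -/
noncomputable def marginal [Fintype X] (π : X → ℝ) (C : X → Y → ℝ) (y : Y) : ℝ :=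
  ∑ x, π x * C x y

/-- Lift(π, C): max over pairs (x, y) with π x * C x y > 0 of C x y / p(y). -/
noncomputable def Lift [Fintype X] (π : X → ℝ) (C : X → Y → ℝ) : ℝ :=
  sSup {r : ℝ | ∃ x y, 0 < π x * C x y ∧ r = C x y / marginal π C y}

/-- Lift capacity: the sup over all full-support priors π of Lift(π, C). -/
noncomputable def MaxLift [Fintype X] (C : X → Y → ℝ) : ℝ :=
  sSup {r : ℝ | ∃ π : X → ℝ, (∀ x, 0 < π x) ∧ (∑ x, π x = 1) ∧ r = Lift π C}

/-- Prior g-vulnerability V_g(π) = max_w ∑_x π x * g w x. -/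
noncomputable def Vg [Fintype X] [Fintype W] [Nonempty W] (g : W → X → ℝ) (π : X → ℝ) : ℝ :=
  Finset.univ.sup' Finset.univ_nonempty fun w => ∑ x, π x * g w x

/-- Max-case posterior g-vulnerability: max over y with p(y) > 0 of V_g(δ^y). -/
noncomputable def VgMax [Fintype X] [Fintype W] [Nonempty W]
    (g : W → X → ℝ) (π : X → ℝ) (C : X → Y → ℝ) : ℝ :=
  sSup {r : ℝ | ∃ y, 0 < marginal π C y ∧
    r = Vg g (fun x => π x * C x y / marginal π C y)}

/-- Average-case posterior g-vulnerability V_g⟨π, C⟩ = ∑_y max_w ∑_x π x * C x y * g w x. -/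
noncomputable def VgPost [Fintype X] [Fintype Y] [Fintype W] [Nonempty W]
    (g : W → X → ℝ) (π : X → ℝ) (C : X → Y → ℝ) : ℝ :=
  ∑ y, Finset.univ.sup' Finset.univ_nonempty fun w => ∑ x, π x * C x y * g w x

/-!
The marginal p(y) is a convex combination of the entries C x' y, so each ratio C x y / p(y) is
bounded by the largest column ratio C x y / C x' y; this bounds MaxLift from above. Conversely,
the priors (1 - ε) δ_b + ε u with u uniform have full support and marginal tending to C b y as
ε → 0, so their lifts approach C a y / C b y for every a and y.
-/

open Filter Topology

section Marginal

variable [Fintype X]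

lemma marginal_add (π ρ : X → ℝ) (C : X → Y → ℝ) (y : Y) :
    marginal (π + ρ) C y = marginal π C y + marginal ρ C y := by
  simp only [marginal, Pi.add_apply, add_mul, sum_add_distrib]

lemma marginal_smul (t : ℝ) (π : X → ℝ) (C : X → Y → ℝ) (y : Y) :
    marginal (t • π) C y = t * marginal π C y := by
  simp only [marginal, Pi.smul_apply, smul_eq_mul, mul_sum, mul_assoc]

lemma marginal_single [DecidableEq X] (b : X) (C : X → Y → ℝ) (y : Y) :
    marginal (Pi.single b 1) C y = C b y := by
  simp [marginal, Pi.single_apply]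

lemma mul_le_marginal {π : X → ℝ} {C : X → Y → ℝ} {y : Y} (hπ : ∀ x, 0 ≤ π x)
    (hC : ∀ x, 0 ≤ C x y) (x : X) : π x * C x y ≤ marginal π C y :=
  single_le_sum (fun x' _ => mul_nonneg (hπ x') (hC x')) (mem_univ x)

lemma le_mul_marginal {π : X → ℝ} {C : X → Y → ℝ} {c M : ℝ} {y : Y} (hπ : ∀ x, 0 ≤ π x)
    (hπ1 : ∑ x, π x = 1) (h : ∀ x, c ≤ M * C x y) : c ≤ M * marginal π C y :=
  calc c = ∑ x, π x * c := by rw [← sum_mul, hπ1, one_mul]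
    _ ≤ ∑ x, π x * (M * C x y) := sum_le_sum fun x _ => mul_le_mul_of_nonneg_left (h x) (hπ x)
    _ = M * marginal π C y := by rw [marginal, mul_sum]; congr 1; ext; ring

lemma mix_pos_and_sum_eq_one {ρ u : X → ℝ} {ε : ℝ} (hρ : ∀ x, 0 ≤ ρ x) (hρ1 : ∑ x, ρ x = 1)
    (hu : ∀ x, 0 < u x) (hu1 : ∑ x, u x = 1) (hε0 : 0 < ε) (hε1 : ε ≤ 1) :
    (∀ x, 0 < ((1 - ε) • ρ + ε • u) x) ∧ ∑ x, ((1 - ε) • ρ + ε • u) x = 1 := by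
  simp only [Pi.add_apply, Pi.smul_apply, smul_eq_mul]
  refine ⟨fun x => ?_, ?_⟩
  · nlinarith [hρ x, hu x]
  · rw [sum_add_distrib, ← mul_sum, ← mul_sum, hρ1, hu1]
    ring

end Marginal

section Lift

variable [Fintype X] {π : X → ℝ} {C : X → Y → ℝ} {M : ℝ}

lemma lift_le (hπ : ∀ x, 0 ≤ π x) (hπ1 : ∑ x, π x = 1) (hC : ∀ x y, 0 ≤ C x y)
    (hM0 : 0 ≤ M) (hM : ∀ x x' y, C x y ≤ M * C x' y) : Lift π C ≤ M := by
  refine Real.sSup_le ?_ hM0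
  rintro r ⟨x, y, hxy, rfl⟩
  have hp : 0 < marginal π C y := hxy.trans_le (mul_le_marginal hπ (hC · y) x)
  exact (div_le_iff₀ hp).2 (le_mul_marginal hπ hπ1 (hM x · y))

lemma div_marginal_le_lift [Finite Y] {x : X} {y : Y} (h : 0 < π x * C x y) :
    C x y / marginal π C y ≤ Lift π C := by
  refine le_csSup ?_ ⟨x, y, h, rfl⟩
  refine ((Set.finite_range fun p : X × Y => C p.1 p.2 / marginal π C p.2).subset ?_).bddAbove
  rintro r ⟨x, y, -, rfl⟩
  exact ⟨(x, y), rfl⟩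

lemma mem_upperBounds_lifts (hC : ∀ x y, 0 ≤ C x y) (hM0 : 0 ≤ M)
    (hM : ∀ x x' y, C x y ≤ M * C x' y) :
    M ∈ upperBounds {r : ℝ | ∃ π : X → ℝ, (∀ x, 0 < π x) ∧ (∑ x, π x = 1) ∧ r = Lift π C} := by
  rintro r ⟨π, hπ, hπ1, rfl⟩
  exact lift_le (fun x => (hπ x).le) hπ1 hC hM0 hM

lemma maxLift_le (hC : ∀ x y, 0 ≤ C x y) (hM0 : 0 ≤ M) (hM : ∀ x x' y, C x y ≤ M * C x' y) :
    MaxLift C ≤ M :=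
  Real.sSup_le (mem_upperBounds_lifts hC hM0 hM) hM0

lemma lift_le_maxLift (hC : ∀ x y, 0 ≤ C x y) (hM0 : 0 ≤ M)
    (hM : ∀ x x' y, C x y ≤ M * C x' y) (hπ : ∀ x, 0 < π x) (hπ1 : ∑ x, π x = 1) :
    Lift π C ≤ MaxLift C :=
  le_csSup ⟨M, mem_upperBounds_lifts hC hM0 hM⟩ ⟨π, hπ, hπ1, rfl⟩

lemma div_le_maxLift [Nonempty X] [Finite Y] (hC : ∀ x y, 0 < C x y) (hM0 : 0 ≤ M)
    (hM : ∀ x x' y, C x y ≤ M * C x' y) (a b : X) (y : Y) : C a y / C b y ≤ MaxLift C := by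
  classical
  set u : X → ℝ := fun _ => 1 / Fintype.card X
  have hu : ∀ x, 0 < u x := fun _ => by positivity
  have hu1 : ∑ x, u x = 1 := by simp [u]
  set π : ℝ → X → ℝ := fun ε => (1 - ε) • Pi.single b 1 + ε • u
  have hmarginal (ε : ℝ) : marginal (π ε) C y = (1 - ε) * C b y + ε * marginal u C y := by
    simp only [π, marginal_add, marginal_smul, marginal_single]
  have hlim : Tendsto (fun ε => C a y / marginal (π ε) C y) (𝓝[>] 0) (𝓝 (C a y / C b y)) := by
    have hcont : ContinuousAt (fun ε => C a y / marginal (π ε) C y) 0 := by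
      simp only [hmarginal]
      exact continuousAt_const.div (by fun_prop) (by simpa using (hC b y).ne')
    simpa [hmarginal] using hcont.tendsto.mono_left nhdsWithin_le_nhds
  refine le_of_tendsto hlim ?_
  filter_upwards [Ioo_mem_nhdsGT one_pos] with ε ⟨hε0, hε1⟩
  obtain ⟨hπ, hπ1⟩ := mix_pos_and_sum_eq_one (ρ := Pi.single b 1)
    (fun x => by simp only [Pi.single_apply]; positivity)
    (Fintype.sum_pi_single' b 1) hu hu1 hε0 hε1.le
  exact (div_marginal_le_lift (mul_pos (hπ a) (hC a y))).trans
    (lift_le_maxLift (fun x y => (hC x y).le) hM0 hM hπ hπ1)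

end Lift

theorem maxLift_eq_max_ratio_general {X Y : Type*} [Fintype X] [Nonempty X] [Fintype Y] [Nonempty Y]
    (C : X → Y → ℝ) (hCpos : ∀ x y, 0 < C x y) :
    MaxLift C = Finset.univ.sup' Finset.univ_nonempty
      (fun p : X × X × Y => C p.1 p.2.2 / C p.2.1 p.2.2) := by
  set ratio := fun p : X × X × Y => C p.1 p.2.2 / C p.2.1 p.2.2
  set M := Finset.univ.sup' Finset.univ_nonempty ratio
  have hM (x x' : X) (y : Y) : C x y ≤ M * C x' y :=
    (div_le_iff₀ (hCpos x' y)).1 (le_sup' ratio (mem_univ (x, x', y)))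
  obtain ⟨⟨a, b, y⟩, -, hMab : M = C a y / C b y⟩ := exists_mem_eq_sup' univ_nonempty ratio
  have hM0 : 0 ≤ M := hMab ▸ div_nonneg (hCpos a y).le (hCpos b y).le
  exact le_antisymm (maxLift_le (fun x y => (hCpos x y).le) hM0 hM)
    (hMab ▸ div_le_maxLift hCpos hM0 hM a b y)

/-- The lift capacity equals the maximum column ratio, i.e. e^ε of local DP. -/
theorem maxLift_eq_max_ratio {X Y : Type*} [Fintype X] [Nonempty X] [Fintype Y] [Nonempty Y]
    (C : X → Y → ℝ) (hCpos : ∀ x y, 0 < C x y) (hC1 : ∀ x, ∑ y, C x y = 1) :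
    MaxLift C = Finset.univ.sup' Finset.univ_nonempty
      (fun p : X × X × Y => C p.1 p.2.2 / C p.2.1 p.2.2) :=
  maxLift_eq_max_ratio_general C hCpos
end

section
/- Let Z, X, Y be finite nonempty types, D a channel from Z to X and C a channel from X to Y, all of whose entries are strictly positive, and let DC denote the composed channel from Z to Y given by (DC) z y = ∑_x D z x · C x y. Then the lift capacity of the composition is bounded by that of C: MaxLift(DC) ≤ MaxLift(C), where MaxLift of a channel is the supremum of its lift over all full-support priors on its input. -/
open Finset

variable {X Y W : Type*}

lemma lift_set_bddAbove [Fintype X] [Fintype Y] (π : X → ℝ) (C : X → Y → ℝ) :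
    BddAbove {r : ℝ | ∃ x y, 0 < π x * C x y ∧ r = C x y / marginal π C y} := by
  apply Set.Finite.bddAbove
  apply Set.Finite.subset (Set.finite_range fun p : X × Y => C p.1 p.2 / marginal π C p.2)
  rintro r ⟨x, y, -, rfl⟩
  exact ⟨(x, y), rfl⟩

lemma lift_nonneg [Fintype X] [Nonempty X] [Fintype Y] [Nonempty Y]
    (π : X → ℝ) (hπ : ∀ x, 0 < π x) (C : X → Y → ℝ) (hCpos : ∀ x y, 0 < C x y) :
    0 ≤ Lift π C := by
  obtain ⟨x⟩ := (inferInstance : Nonempty X)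
  obtain ⟨y⟩ := (inferInstance : Nonempty Y)
  have hm : 0 < marginal π C y :=
    Finset.sum_pos (fun x _ => mul_pos (hπ x) (hCpos x y)) univ_nonempty
  have hmem : C x y / marginal π C y ∈
      {r : ℝ | ∃ x y, 0 < π x * C x y ∧ r = C x y / marginal π C y} :=
    ⟨x, y, mul_pos (hπ x) (hCpos x y), rfl⟩
  have := le_csSup (lift_set_bddAbove π C) hmem
  have hpos : 0 < C x y / marginal π C y := div_pos (hCpos x y) hm
  unfold Lift
  linarith

lemma lift_le_of_ratio_bound [Fintype X] [Nonempty X] [Fintype Y] [Nonempty Y]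
    (π : X → ℝ) (hπ : ∀ x, 0 < π x) (hπ1 : ∑ x, π x = 1)
    (C : X → Y → ℝ) (hCpos : ∀ x y, 0 < C x y)
    (M : ℝ) (hM : ∀ x x' y, C x y / C x' y ≤ M) :
    Lift π C ≤ M := by
  have hM0 : 0 ≤ M := by
    obtain ⟨x⟩ := (inferInstance : Nonempty X)
    obtain ⟨y⟩ := (inferInstance : Nonempty Y)
    have := hM x x y
    rw [div_self (hCpos x y).ne'] at this
    linarith
  apply Real.sSup_le _ hM0
  rintro r ⟨x, y, -, rfl⟩
  set m := Finset.univ.inf' univ_nonempty (fun x' => C x' y) with hm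
  have hmpos : 0 < m := by
    rw [hm, Finset.lt_inf'_iff]
    exact fun x' _ => hCpos x' y
  have hmle : m ≤ marginal π C y := by
    have h1 : m = ∑ x, π x * m := by rw [← Finset.sum_mul, hπ1, one_mul]
    rw [h1]
    exact Finset.sum_le_sum fun x' _ =>
      mul_le_mul_of_nonneg_left (Finset.inf'_le _ (mem_univ x')) (hπ x').le
  obtain ⟨x', -, hx'⟩ := Finset.exists_mem_eq_inf' (univ_nonempty (α := X)) (fun x' => C x' y)
  calc C x y / marginal π C y ≤ C x y / m :=
        div_le_div_of_nonneg_left (hCpos x y).le hmpos hmle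
    _ = C x y / C x' y := by rw [hm, hx']
    _ ≤ M := hM x x' y

lemma maxlift_bddAbove [Fintype X] [Nonempty X] [Fintype Y] [Nonempty Y]
    (C : X → Y → ℝ) (hCpos : ∀ x y, 0 < C x y) :
    BddAbove {r : ℝ | ∃ π : X → ℝ, (∀ x, 0 < π x) ∧ (∑ x, π x = 1) ∧ r = Lift π C} := by
  refine ⟨Finset.univ.sup' univ_nonempty (fun p : X × X × Y => C p.1 p.2.2 / C p.2.1 p.2.2), ?_⟩
  rintro r ⟨π, hπ, hπ1, rfl⟩
  exact lift_le_of_ratio_bound π hπ hπ1 C hCpos _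
    (fun x x' y =>
      Finset.le_sup' (fun p : X × X × Y => C p.1 p.2.2 / C p.2.1 p.2.2)
        (mem_univ (x, x', y)))

/-- Dalenius bound for lift capacity: MaxLift(DC) ≤ MaxLift(C). -/
theorem maxLift_comp_le {Z X Y : Type*} [Fintype Z] [Nonempty Z] [Fintype X] [Nonempty X]
    [Fintype Y] [Nonempty Y]
    (D : Z → X → ℝ) (hDpos : ∀ z x, 0 < D z x) (hD1 : ∀ z, ∑ x, D z x = 1)
    (C : X → Y → ℝ) (hCpos : ∀ x y, 0 < C x y) (hC1 : ∀ x, ∑ y, C x y = 1) :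
    MaxLift (fun z y => ∑ x, D z x * C x y) ≤ MaxLift C := by
  have bddC := maxlift_bddAbove C hCpos
  have hMLC0 : 0 ≤ MaxLift C := by
    set τ0 : X → ℝ := fun _ => (Fintype.card X : ℝ)⁻¹ with hτ0
    have hcard : (0 : ℝ) < Fintype.card X := by
      exact_mod_cast Fintype.card_pos
    have hτ0pos : ∀ x, 0 < τ0 x := fun _ => inv_pos.mpr hcard
    have hτ01 : ∑ _x : X, τ0 _x = 1 := by
      rw [Finset.sum_const, card_univ, nsmul_eq_mul, mul_inv_cancel₀ hcard.ne']
    have h1 : Lift τ0 C ≤ MaxLift C := le_csSup bddC ⟨τ0, hτ0pos, hτ01, rfl⟩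
    have h2 := lift_nonneg τ0 hτ0pos C hCpos
    linarith
  apply Real.sSup_le _ hMLC0
  rintro r ⟨π, hπpos, hπ1, rfl⟩
  set τ : X → ℝ := fun x => ∑ z, π z * D z x with hτ
  have hτpos : ∀ x, 0 < τ x := fun x =>
    Finset.sum_pos (fun z _ => mul_pos (hπpos z) (hDpos z x)) univ_nonempty
  have hτ1 : ∑ x, τ x = 1 := by
    rw [hτ]
    rw [Finset.sum_comm]
    calc ∑ z, ∑ x, π z * D z x = ∑ z, π z * ∑ x, D z x := by
          simp [Finset.mul_sum]
      _ = 1 := by simp [hD1, hπ1]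
  have hτC : Lift τ C ≤ MaxLift C := le_csSup bddC ⟨τ, hτpos, hτ1, rfl⟩
  have hLnn : 0 ≤ Lift τ C := lift_nonneg τ hτpos C hCpos
  have key : Lift π (fun z y => ∑ x, D z x * C x y) ≤ Lift τ C := by
    apply Real.sSup_le _ hLnn
    rintro r ⟨z, y, -, rfl⟩
    have hq : marginal π (fun z y => ∑ x, D z x * C x y) y = marginal τ C y := by
      simp only [marginal, hτ, Finset.mul_sum, Finset.sum_mul]
      rw [Finset.sum_comm]
      exact Finset.sum_congr rfl fun x _ => Finset.sum_congr rfl fun z _ => by ring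
    rw [hq]
    have hqpos : 0 < marginal τ C y :=
      Finset.sum_pos (fun x _ => mul_pos (hτpos x) (hCpos x y)) univ_nonempty
    have hterm : ∀ x, C x y / marginal τ C y ≤ Lift τ C := fun x =>
      le_csSup (lift_set_bddAbove τ C) ⟨x, y, mul_pos (hτpos x) (hCpos x y), rfl⟩
    calc (∑ x, D z x * C x y) / marginal τ C y
        = ∑ x, D z x * (C x y / marginal τ C y) := by
          rw [Finset.sum_div]
          exact Finset.sum_congr rfl fun x _ => by ring
      _ ≤ ∑ x, D z x * Lift τ C :=
          Finset.sum_le_sum fun x _ =>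
            mul_le_mul_of_nonneg_left (hterm x) (hDpos z x).le
      _ = Lift τ C := by rw [← Finset.sum_mul, hD1, one_mul]
  linarith
end
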